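/- arXiv:2203.14458 — 2 statements merged into one kernel-verified Lean document; each statement's English description precedes it below -/
import Mathlib

section
/- Fix a prime power q. There exists a constant C > 0, depending only on q, such that for every real x ≥ 2, | Σ_{P : |P| ≤ x} (log |P|) / |P| − log x | ≤ C, where the sum runs over monic irreducible polynomials P ∈ F_q[T] with |P| ≤ x. -/
/-! Factoring `X ^ q ^ n - X`, the squarefree product of the monic irreducibles whose degree
divides `n`, gives Gauss's identity `∑_{d ∣ n} d π(d) = q ^ n`, where `π(d)` counts monic
irreducibles of degree `d`. Hence `n π(n) ≤ q ^ n`, and `n π(n) > q ^ n - q ^ (n/2 + 1)`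
because proper divisors of `n` are at most `n / 2`. With `N = ⌊log x / log q⌋`, the sum is
`log q * ∑_{n ≤ N} n π(n) / q ^ n = N log q + O(q log q)`, and `log x = N log q + O(log q)`. -/

open Polynomial
open scoped Classical

noncomputable section

/-- The norm of a nonzero polynomial `f` over `F_q` is `q ^ deg f`; the norm of `0` is `0`. -/
def fqNorm {F : Type} [Field F] [Fintype F] (f : F[X]) : ℝ :=
  if f = 0 then 0 else (Fintype.card F : ℝ) ^ f.natDegree

/-- The value at a polynomial `f` of a Dirichlet character mod `Q`, i.e. of a multiplicative
character of the quotient ring `F_q[T]/(Q)` (extended by zero off the units). -/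
def charVal {F : Type} [Field F] [Fintype F] (Q : F[X])
    (χ : MulChar (F[X] ⧸ Ideal.span {Q}) ℂ) (f : F[X]) : ℂ :=
  χ (Ideal.Quotient.mk (Ideal.span {Q}) f)

/-- The central L-value `L(1/2, χ) = Σ_{monic f, |f| < |Q|} χ(f) |f|^{-1/2}`. -/
def centralL {F : Type} [Field F] [Fintype F] (Q : F[X])
    (χ : MulChar (F[X] ⧸ Ideal.span {Q}) ℂ) : ℂ :=
  ∑ᶠ f ∈ {f : F[X] | f.Monic ∧ fqNorm f < fqNorm Q},
    charVal Q χ f / (Real.sqrt (fqNorm f) : ℂ)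

open UniqueFactorizationMonoid Finset

theorem Polynomial.sum_natDegree_normalizedFactors_toFinset {K : Type*} [Field K]
    [DecidableEq K] {M : K[X]} (hM : M.Monic) (hsq : Squarefree M) :
    ∑ P ∈ (normalizedFactors M).toFinset, P.natDegree = M.natDegree := by
  have hnodup := (squarefree_iff_nodup_normalizedFactors hM.ne_zero).mp hsq
  have hprod : (normalizedFactors M).prod = M := by
    rw [prod_normalizedFactors_eq hM.ne_zero, hM.normalize_eq_self]
  conv_rhs => rw [← hprod]
  rw [natDegree_multiset_prod_of_monic _ fun P hP => (Polynomial.mem_normalizedFactors_iff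
    hM.ne_zero |>.mp hP).2.1, Finset.sum_eq_multiset_sum, Multiset.toFinset_val,
    hnodup.dedup]

theorem Nat.le_div_two_of_mem_properDivisors {d n : ℕ} (hd : d ∈ n.properDivisors) :
    d ≤ n / 2 := by
  have h2 := Nat.one_lt_div_of_mem_properDivisors hd
  rw [Nat.le_div_iff_mul_le two_pos]
  calc d * 2 ≤ d * (n / d) := Nat.mul_le_mul_left d h2
    _ = n := Nat.mul_div_cancel' (Nat.mem_properDivisors.mp hd).1

theorem pow_div_two_le_mul_pow {a : ℝ} (ha : 16 / 9 ≤ a) (n : ℕ) :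
    a ^ (n / 2) ≤ (3 / 4 * a) ^ n :=
  calc a ^ (n / 2) ≤ ((3 / 4 * a) ^ 2) ^ (n / 2) := by gcongr; nlinarith
    _ = (3 / 4 * a) ^ (2 * (n / 2)) := (pow_mul _ _ _).symm
    _ ≤ (3 / 4 * a) ^ n := pow_le_pow_right₀ (by linarith) (Nat.mul_div_le n 2)

namespace FiniteField

variable (F : Type*) [Field F] [Fintype F]

variable {F} in
theorem dvd_X_pow_card_pow_sub_X_iff {P : F[X]} (hP : Irreducible P) {n : ℕ} :
    P ∣ X ^ Fintype.card F ^ n - X ↔ P.natDegree ∣ n := by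
  rw [Fintype.card_eq_nat_card]
  exact hP.natDegree_dvd_iff_dvd_X_pow_card_pow_sub_X.symm

theorem finite_setOf_monic_irreducible_natDegree_eq (n : ℕ) :
    {P : F[X] | P.Monic ∧ Irreducible P ∧ P.natDegree = n}.Finite := by
  rcases eq_or_ne n 0 with rfl | hn
  · convert Set.finite_empty
    ext P
    simpa using fun _ hP => hP.natDegree_pos.ne'
  refine (normalizedFactors (X ^ Fintype.card F ^ n - X : F[X])).toFinset.finite_toSet.subset ?_
  rintro P ⟨hmonic, hirr, rfl⟩
  rw [Finset.mem_coe, Multiset.mem_toFinset, Polynomial.mem_normalizedFactors_iff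
    (X_pow_card_pow_sub_X_ne_zero F hn Fintype.one_lt_card)]
  exact ⟨hirr, hmonic, (dvd_X_pow_card_pow_sub_X_iff hirr).mpr dvd_rfl⟩

def monicIrreducibleOfDegree (n : ℕ) : Finset F[X] :=
  (finite_setOf_monic_irreducible_natDegree_eq F n).toFinset

variable {F} in
@[simp]
theorem mem_monicIrreducibleOfDegree {n : ℕ} {P : F[X]} :
    P ∈ monicIrreducibleOfDegree F n ↔ P.Monic ∧ Irreducible P ∧ P.natDegree = n :=
  Set.Finite.mem_toFinset _

theorem pairwiseDisjoint_monicIrreducibleOfDegree :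
    (Set.univ : Set ℕ).PairwiseDisjoint (monicIrreducibleOfDegree F) := by
  intro m _ n _ hmn
  rw [Function.onFun, Finset.disjoint_left]
  intro P hm hn
  exact hmn ((mem_monicIrreducibleOfDegree.mp hm).2.2 ▸ (mem_monicIrreducibleOfDegree.mp hn).2.2)

theorem sum_divisors_mul_card_monicIrreducibleOfDegree {n : ℕ} (hn : n ≠ 0) :
    ∑ d ∈ n.divisors, d * #(monicIrreducibleOfDegree F d) = Fintype.card F ^ n := by
  have hq := Fintype.one_lt_card (α := F)
  set M : F[X] := X ^ Fintype.card F ^ n - X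
  have hM : M.Monic := monic_X_pow_sub (by rw [degree_X]; exact_mod_cast Nat.one_lt_pow hn hq)
  have hfactors :
      (normalizedFactors M).toFinset = n.divisors.biUnion (monicIrreducibleOfDegree F) := by
    ext P
    simp only [Multiset.mem_toFinset, Polynomial.mem_normalizedFactors_iff hM.ne_zero,
      mem_biUnion, Nat.mem_divisors, mem_monicIrreducibleOfDegree]
    constructor
    · rintro ⟨hirr, hmonic, hdvd⟩
      exact ⟨P.natDegree, ⟨(dvd_X_pow_card_pow_sub_X_iff hirr).mp hdvd, hn⟩,
        hmonic, hirr, rfl⟩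
    · rintro ⟨_, ⟨hdvd, -⟩, hmonic, hirr, rfl⟩
      exact ⟨hirr, hmonic, (dvd_X_pow_card_pow_sub_X_iff hirr).mpr hdvd⟩
  have hsq : Squarefree M := by
    refine (galois_poly_separable (ringChar F) _ (dvd_pow ?_ hn)).squarefree
    exact (ringChar.spec F _).mp (FiniteField.cast_card_eq_zero F)
  rw [← FiniteField.X_pow_card_pow_sub_X_natDegree_eq F hn hq,
    ← sum_natDegree_normalizedFactors_toFinset hM hsq, hfactors,
    sum_biUnion (pairwiseDisjoint_monicIrreducibleOfDegree F |>.subset (Set.subset_univ _))]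
  refine sum_congr rfl fun d _ => ?_
  rw [sum_congr rfl fun P hP => (mem_monicIrreducibleOfDegree.mp hP).2.2, sum_const,
    smul_eq_mul, mul_comm]

theorem mul_card_monicIrreducibleOfDegree_le {n : ℕ} (hn : n ≠ 0) :
    n * #(monicIrreducibleOfDegree F n) ≤ Fintype.card F ^ n := by
  rw [← sum_divisors_mul_card_monicIrreducibleOfDegree F hn]
  exact single_le_sum (f := fun d => d * #(monicIrreducibleOfDegree F d))
    (fun _ _ => Nat.zero_le _) (Nat.mem_divisors_self n hn)

theorem pow_card_lt_mul_card_monicIrreducibleOfDegree_add {n : ℕ} (hn : n ≠ 0) :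
    Fintype.card F ^ n < n * #(monicIrreducibleOfDegree F n) + Fintype.card F ^ (n / 2 + 1) := by
  have hproper : ∑ d ∈ n.properDivisors, d * #(monicIrreducibleOfDegree F d)
      < Fintype.card F ^ (n / 2 + 1) :=
    calc ∑ d ∈ n.properDivisors, d * #(monicIrreducibleOfDegree F d)
        ≤ ∑ d ∈ n.properDivisors, Fintype.card F ^ d :=
          sum_le_sum fun d hd =>
            mul_card_monicIrreducibleOfDegree_le F (Nat.pos_of_mem_properDivisors hd).ne'
      _ < Fintype.card F ^ (n / 2 + 1) :=
          Nat.geomSum_lt Fintype.one_lt_card fun d hd =>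
            Nat.lt_add_one_of_le (Nat.le_div_two_of_mem_properDivisors hd)
  rw [← sum_divisors_mul_card_monicIrreducibleOfDegree F hn, ← Nat.cons_self_properDivisors hn,
    sum_cons]
  omega

theorem mul_card_monicIrreducibleOfDegree_div_pow_le {n : ℕ} (hn : n ≠ 0) :
    n * #(monicIrreducibleOfDegree F n) / (Fintype.card F : ℝ) ^ n ≤ 1 := by
  rw [div_le_one (by positivity)]
  exact_mod_cast mul_card_monicIrreducibleOfDegree_le F hn

theorem one_sub_le_mul_card_monicIrreducibleOfDegree_div_pow {n : ℕ} (hn : n ≠ 0) :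
    1 - Fintype.card F * (3 / 4 : ℝ) ^ n
      ≤ n * #(monicIrreducibleOfDegree F n) / (Fintype.card F : ℝ) ^ n := by
  have hq : (2 : ℝ) ≤ Fintype.card F := by exact_mod_cast Fintype.one_lt_card (α := F)
  have hlt : (Fintype.card F : ℝ) ^ n
      < n * #(monicIrreducibleOfDegree F n) + (Fintype.card F : ℝ) ^ (n / 2 + 1) := by
    exact_mod_cast pow_card_lt_mul_card_monicIrreducibleOfDegree_add F hn
  set q : ℝ := (Fintype.card F : ℝ)
  have hhalf : q ^ (n / 2 + 1) ≤ q * (3 / 4) ^ n * q ^ n :=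
    calc q ^ (n / 2 + 1) = q * q ^ (n / 2) := pow_succ' _ _
      _ ≤ q * (3 / 4 * q) ^ n := by gcongr; exact pow_div_two_le_mul_pow (by linarith) n
      _ = q * (3 / 4) ^ n * q ^ n := by rw [mul_pow]; ring
  rw [le_div_iff₀ (by positivity)]
  nlinarith

theorem sum_mul_card_monicIrreducibleOfDegree_div_pow_le (N : ℕ) :
    ∑ n ∈ Icc 1 N, n * #(monicIrreducibleOfDegree F n) / (Fintype.card F : ℝ) ^ n ≤ N :=
  calc ∑ n ∈ Icc 1 N, n * #(monicIrreducibleOfDegree F n) / (Fintype.card F : ℝ) ^ n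
      ≤ ∑ n ∈ Icc 1 N, (1 : ℝ) :=
        sum_le_sum fun n hn =>
          mul_card_monicIrreducibleOfDegree_div_pow_le F
            (Nat.one_le_iff_ne_zero.mp (mem_Icc.mp hn).1)
    _ = N := by simp

theorem sub_le_sum_mul_card_monicIrreducibleOfDegree_div_pow (N : ℕ) :
    N - 3 * Fintype.card F
      ≤ ∑ n ∈ Icc 1 N, n * #(monicIrreducibleOfDegree F n) / (Fintype.card F : ℝ) ^ n := by
  have hgeom : ∑ n ∈ Icc 1 N, (3 / 4 : ℝ) ^ n ≤ 3 := by
    rw [← Ico_add_one_right_eq_Icc]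
    exact (geom_sum_Ico_le_of_lt_one (by norm_num) (by norm_num)).trans_eq (by norm_num)
  calc N - 3 * (Fintype.card F : ℝ)
      ≤ ∑ n ∈ Icc 1 N, (1 - Fintype.card F * (3 / 4 : ℝ) ^ n) := by
        rw [sum_sub_distrib, ← mul_sum, sum_const, Nat.card_Icc, nsmul_one, add_tsub_cancel_right]
        nlinarith [Nat.cast_nonneg (α := ℝ) (Fintype.card F)]
    _ ≤ _ := sum_le_sum fun n hn =>
        one_sub_le_mul_card_monicIrreducibleOfDegree_div_pow F
          (Nat.one_le_iff_ne_zero.mp (mem_Icc.mp hn).1)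

end FiniteField

section fqNorm

open FiniteField Real

variable {F : Type} [Field F] [Fintype F]

theorem fqNorm_of_ne_zero {f : F[X]} (hf : f ≠ 0) :
    fqNorm f = (Fintype.card F : ℝ) ^ f.natDegree :=
  if_neg hf

theorem fqNorm_le_iff {f : F[X]} (hf : f ≠ 0) {x : ℝ} (hx : 1 ≤ x) :
    fqNorm f ≤ x ↔ f.natDegree ≤ ⌊log x / log (Fintype.card F)⌋₊ := by
  have hlogq : 0 < log (Fintype.card F) := log_pos (by exact_mod_cast Fintype.one_lt_card)
  rw [fqNorm_of_ne_zero hf, pow_le_iff_le_log (by positivity) (by positivity),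
    Nat.le_floor_iff (div_nonneg (log_nonneg hx) hlogq.le), le_div_iff₀ hlogq]

variable (F) in
theorem finsum_log_fqNorm_div_fqNorm_eq (N : ℕ) :
    ∑ᶠ P ∈ {P : F[X] | P.Monic ∧ Irreducible P ∧ P.natDegree ≤ N},
        log (fqNorm P) / fqNorm P
      = log (Fintype.card F)
        * ∑ n ∈ Icc 1 N, n * #(monicIrreducibleOfDegree F n) / (Fintype.card F : ℝ) ^ n := by
  have hset : {P : F[X] | P.Monic ∧ Irreducible P ∧ P.natDegree ≤ N}
      = ↑((Icc 1 N).biUnion (monicIrreducibleOfDegree F)) := by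
    ext P
    simp only [Set.mem_ofPred_eq, coe_biUnion, coe_Icc, Set.mem_iUnion, Set.mem_Icc, mem_coe,
      mem_monicIrreducibleOfDegree, exists_prop]
    constructor
    · rintro ⟨hmonic, hirr, hN⟩
      exact ⟨P.natDegree, ⟨hirr.natDegree_pos, hN⟩, hmonic, hirr, rfl⟩
    · rintro ⟨_, ⟨-, hN⟩, hmonic, hirr, rfl⟩
      exact ⟨hmonic, hirr, hN⟩
  rw [hset, finsum_mem_coe_finset, sum_biUnion ((pairwiseDisjoint_monicIrreducibleOfDegree F).subset
    (Set.subset_univ _)), mul_sum]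
  refine sum_congr rfl fun n _ => ?_
  have hterm : ∀ P ∈ monicIrreducibleOfDegree F n,
      log (fqNorm P) / fqNorm P = n * log (Fintype.card F) / (Fintype.card F : ℝ) ^ n := by
    intro P hP
    obtain ⟨-, hirr, rfl⟩ := mem_monicIrreducibleOfDegree.mp hP
    rw [fqNorm_of_ne_zero hirr.ne_zero, log_pow]
  rw [sum_congr rfl hterm, sum_const, nsmul_eq_mul]
  ring

end fqNorm

/-- Mertens-type estimate over `F_q[T]`: `Σ_{|P| ≤ x} log|P|/|P| = log x + O(1)`,
the sum running over monic irreducible polynomials. -/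
theorem mertens_first (F : Type) [Field F] [Fintype F] :
    ∃ C : ℝ, 0 < C ∧
      ∀ x : ℝ, 2 ≤ x →
        |(∑ᶠ P ∈ {P : F[X] | P.Monic ∧ Irreducible P ∧ fqNorm P ≤ x},
            Real.log (fqNorm P) / fqNorm P) - Real.log x| ≤ C := by
  have hq : (2 : ℝ) ≤ Fintype.card F := by exact_mod_cast Fintype.one_lt_card (α := F)
  set q : ℝ := (Fintype.card F : ℝ)
  have hlogq : 0 < Real.log q := Real.log_pos (by linarith)
  refine ⟨(3 * q + 1) * Real.log q, by positivity, fun x hx => ?_⟩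
  set N := ⌊Real.log x / Real.log q⌋₊
  have hset : {P : F[X] | P.Monic ∧ Irreducible P ∧ fqNorm P ≤ x}
      = {P : F[X] | P.Monic ∧ Irreducible P ∧ P.natDegree ≤ N} :=
    Set.ext fun _ => and_congr_right fun _ => and_congr_right fun hirr =>
      fqNorm_le_iff hirr.ne_zero (by linarith)
  have hlogx : N * Real.log q ≤ Real.log x ∧ Real.log x < (N + 1) * Real.log q := by
    rw [← le_div_iff₀ hlogq, ← div_lt_iff₀ hlogq]
    exact ⟨Nat.floor_le (div_nonneg (Real.log_nonneg (by linarith)) hlogq.le),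
      Nat.lt_floor_add_one _⟩
  have hupper := mul_le_mul_of_nonneg_left
    (FiniteField.sum_mul_card_monicIrreducibleOfDegree_div_pow_le F N) hlogq.le
  have hlower := mul_le_mul_of_nonneg_left
    (FiniteField.sub_le_sum_mul_card_monicIrreducibleOfDegree_div_pow F N) hlogq.le
  rw [hset, finsum_log_fqNorm_div_fqNorm_eq, abs_le]
  constructor <;> linarith
end
end

section
/- Fix a prime power q. There exist a constant b (depending only on q) and a constant C > 0 (depending only on q) such that for every real x ≥ 2, | Σ_{P : |P| ≤ x} 1/|P| − log log x − b | ≤ C / log x, where the sum runs over monic irreducible polynomials P ∈ F_q[T] with |P| ≤ x. -/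
open Polynomial
open scoped Classical

noncomputable section

open Finset Real UniqueFactorizationMonoid

/-!
Let `a n` be the number of monic irreducible polynomials of degree `n`. Since `X ^ q ^ n - X` is
squarefree and its monic irreducible factors are exactly those of degree dividing `n`, comparing
degrees gives Gauss's formula `∑ d ∣ n, d * a d = q ^ n`, hence
`a n / q ^ n = 1 / n + O(1 / n ^ 2)`. Grouping the primes by degree, the sum over `|P| ≤ x` is
`∑ n ≤ N, a n / q ^ n` with `N = ⌊log x / log q⌋`, which is `H_N + E + O(1 / N)` for the constant
`E = ∑ (a n / q ^ n - 1 / n)`. Finally `H_N = log N + γ + O(1 / N)` and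
`log N = log log x - log log q + O(1 / N)`.
-/

theorem Nat.mul_pow_div_two_add_one_le {q : ℕ} (hq : 2 ≤ q) (n : ℕ) :
    n * q ^ (n / 2 + 1) ≤ 2 * q ^ n := by
  rcases eq_or_ne n 0 with rfl | hn
  · simp
  set m := n - (n / 2 + 1)
  have hsplit : q ^ n = q ^ (n / 2 + 1) * q ^ m := by rw [← pow_add]; congr 1; omega
  have hm : m + 1 ≤ q ^ m :=
    (Nat.lt_two_pow_self).trans_le (Nat.pow_le_pow_left hq m)
  rw [hsplit, mul_left_comm, mul_comm n]
  gcongr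
  omega

theorem abs_tsum_sub_sum_range_le_of_abs_le_div_sq {g : ℕ → ℝ} {c : ℝ}
    (hg : ∀ n, |g n| ≤ c / n ^ 2) (N : ℕ) :
    |∑' n, g n - ∑ n ∈ range (N + 1), g n| ≤ 2 * c / (N + 1) := by
  have hc : 0 ≤ c := by simpa using (abs_nonneg _).trans (hg 1)
  have hsum : Summable g := by
    refine .of_norm_bounded ((Real.summable_nat_pow_inv.mpr one_lt_two).mul_left c) fun n => ?_
    rw [Real.norm_eq_abs]
    simpa [div_eq_mul_inv] using hg n
  rw [← hsum.sum_add_tsum_nat_add (N + 1), add_sub_cancel_left, ← Real.norm_eq_abs]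
  refine (norm_tsum_le_tsum_norm ((summable_nat_add_iff (N + 1)).mpr hsum).norm).trans <|
    Real.tsum_le_of_sum_range_le (fun _ => norm_nonneg _) fun M => ?_
  calc ∑ k ∈ range M, ‖g (k + (N + 1))‖
      ≤ ∑ k ∈ range M, c * (((N + 1 + k : ℕ) : ℝ) ^ 2)⁻¹ :=
        sum_le_sum fun k _ => by simpa [div_eq_mul_inv, add_comm] using hg (k + (N + 1))
    _ = c * ∑ i ∈ Ioo N (N + 1 + M), ((i : ℝ) ^ 2)⁻¹ := by
        rw [← mul_sum, ← Ico_add_one_left_eq_Ioo, sum_Ico_eq_sum_range,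
          Nat.add_sub_cancel_left]
    _ ≤ c * (2 / (N + 1)) := by gcongr; exact sum_Ioo_inv_sq_le N _
    _ = 2 * c / (N + 1) := by ring

theorem Real.log_add_one_sub_log_le {x : ℝ} (hx : 0 < x) : log (x + 1) - log x ≤ 1 / x := by
  rw [← log_div (by positivity) hx.ne']
  calc log ((x + 1) / x) ≤ (x + 1) / x - 1 := log_le_sub_one_of_pos (by positivity)
    _ = 1 / x := by field_simp; ring

theorem Real.abs_harmonic_sub_log_sub_eulerMascheroniConstant_le {N : ℕ} (hN : N ≠ 0) :
    |(harmonic N : ℝ) - log N - eulerMascheroniConstant| ≤ 1 / N := by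
  have hupper := eulerMascheroniConstant_lt_eulerMascheroniSeq' N
  have hlower := eulerMascheroniSeq_lt_eulerMascheroniConstant N
  rw [eulerMascheroniSeq', if_neg hN] at hupper
  rw [eulerMascheroniSeq] at hlower
  have hlog := log_add_one_sub_log_le (show (0 : ℝ) < N by positivity)
  rw [abs_of_nonneg (by linarith)]
  linarith

theorem fqNorm_of_ne_zero_s5 {F : Type} [Field F] [Fintype F] {P : F[X]} (hP : P ≠ 0) :
    fqNorm P = Fintype.card F ^ P.natDegree :=
  if_neg hP

namespace Polynomial

variable {F : Type} [Field F] [Fintype F]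

theorem squarefree_X_pow_card_pow_sub_X {n : ℕ} (hn : n ≠ 0) :
    Squarefree (X ^ Fintype.card F ^ n - X : F[X]) := by
  obtain ⟨p, _⟩ := CharP.exists F
  have hp : p ∣ Fintype.card F :=
    (CharP.cast_eq_zero_iff F p _).mp (FiniteField.cast_card_eq_zero F)
  exact (galois_poly_separable p _ (hp.trans (dvd_pow_self _ hn))).squarefree

theorem mem_primeFactors_X_pow_card_pow_sub_X {n : ℕ} (hn : n ≠ 0) {P : F[X]} :
    P ∈ primeFactors (X ^ Fintype.card F ^ n - X : F[X]) ↔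
      P.Monic ∧ Irreducible P ∧ P.natDegree ∣ n := by
  have hq : 1 < Fintype.card F := Fintype.one_lt_card
  rw [mem_primeFactors, Polynomial.mem_normalizedFactors_iff
    (FiniteField.X_pow_card_pow_sub_X_ne_zero F hn hq)]
  constructor
  · rintro ⟨hirr, hmonic, hdvd⟩
    rw [← Nat.card_eq_fintype_card] at hdvd
    exact ⟨hmonic, hirr, hirr.natDegree_dvd_of_dvd_X_pow_card_pow_sub_X hdvd⟩
  · rintro ⟨hmonic, hirr, hdvd⟩
    rw [← Nat.card_eq_fintype_card]
    exact ⟨hirr, hmonic, hirr.natDegree_dvd_iff_dvd_X_pow_card_pow_sub_X.mp hdvd⟩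

-- Every monic irreducible of degree `n` divides `X ^ q ^ n - X`, so this is all of them.
variable (F) in
def monicIrreducibles (n : ℕ) : Finset F[X] :=
  {P ∈ primeFactors (X ^ Fintype.card F ^ n - X : F[X]) | P.natDegree = n}

@[simp]
theorem monicIrreducibles_zero : monicIrreducibles F 0 = ∅ := by
  simp [monicIrreducibles]

theorem mem_monicIrreducibles {n : ℕ} {P : F[X]} :
    P ∈ monicIrreducibles F n ↔ P.Monic ∧ Irreducible P ∧ P.natDegree = n := by
  rw [monicIrreducibles, Finset.mem_filter]
  rcases eq_or_ne n 0 with rfl | hn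
  · simpa using fun _ (hirr : Irreducible P) => hirr.natDegree_pos.ne'
  · rw [mem_primeFactors_X_pow_card_pow_sub_X hn]
    constructor
    · rintro ⟨⟨hm, hi, -⟩, hd⟩; exact ⟨hm, hi, hd⟩
    · rintro ⟨hm, hi, hd⟩; exact ⟨⟨hm, hi, hd ▸ dvd_rfl⟩, hd⟩

theorem pairwiseDisjoint_monicIrreducibles (s : Set ℕ) :
    s.PairwiseDisjoint (monicIrreducibles F) := by
  intro a _ b _ hab
  refine Finset.disjoint_left.mpr fun P hPa hPb => hab ?_
  rw [← (mem_monicIrreducibles.mp hPa).2.2, ← (mem_monicIrreducibles.mp hPb).2.2]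

theorem primeFactors_X_pow_card_pow_sub_X {n : ℕ} (hn : n ≠ 0) :
    primeFactors (X ^ Fintype.card F ^ n - X : F[X]) =
      n.divisors.biUnion (monicIrreducibles F) := by
  ext P
  simp only [mem_primeFactors_X_pow_card_pow_sub_X hn, Finset.mem_biUnion, Nat.mem_divisors,
    mem_monicIrreducibles]
  constructor
  · rintro ⟨hm, hi, hd⟩; exact ⟨_, ⟨hd, hn⟩, hm, hi, rfl⟩
  · rintro ⟨d, ⟨hd, -⟩, hm, hi, rfl⟩; exact ⟨hm, hi, hd⟩

theorem sum_divisors_mul_card_monicIrreducibles {n : ℕ} (hn : n ≠ 0) :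
    ∑ d ∈ n.divisors, d * #(monicIrreducibles F d) = Fintype.card F ^ n := by
  set f : F[X] := X ^ Fintype.card F ^ n - X
  have hq : 1 < Fintype.card F := Fintype.one_lt_card
  have hf : f ≠ 0 := FiniteField.X_pow_card_pow_sub_X_ne_zero F hn hq
  calc ∑ d ∈ n.divisors, d * #(monicIrreducibles F d)
      = ∑ P ∈ primeFactors f, P.natDegree := by
        rw [primeFactors_X_pow_card_pow_sub_X hn,
          sum_biUnion (pairwiseDisjoint_monicIrreducibles _)]
        refine sum_congr rfl fun d _ => ?_
        rw [sum_const_nat fun P hP => (mem_monicIrreducibles.mp hP).2.2, mul_comm]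
    _ = (radical f).natDegree := by
        rw [radical, natDegree_prod _ id fun P hP =>
          (irreducible_of_normalized_factor P (mem_primeFactors.mp hP)).ne_zero]
        rfl
    _ = f.natDegree := natDegree_eq_of_degree_eq <| degree_eq_degree_of_associated <|
        radical_associated (squarefree_X_pow_card_pow_sub_X hn).isRadical hf
    _ = Fintype.card F ^ n := FiniteField.X_pow_card_pow_sub_X_natDegree_eq F hn hq

theorem mul_card_monicIrreducibles_le (n : ℕ) :
    n * #(monicIrreducibles F n) ≤ Fintype.card F ^ n := by
  rcases eq_or_ne n 0 with rfl | hn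
  · simp
  rw [← sum_divisors_mul_card_monicIrreducibles hn]
  exact single_le_sum (f := fun d => d * #(monicIrreducibles F d)) (fun d _ => Nat.zero_le _)
    (Nat.mem_divisors_self n hn)

theorem pow_lt_mul_card_monicIrreducibles_add (n : ℕ) :
    Fintype.card F ^ n < n * #(monicIrreducibles F n) + Fintype.card F ^ (n / 2 + 1) := by
  rcases eq_or_ne n 0 with rfl | hn
  · simpa using Fintype.one_lt_card
  have hq : 2 ≤ Fintype.card F := Fintype.one_lt_card
  rw [← sum_divisors_mul_card_monicIrreducibles hn, ← Nat.insert_self_properDivisors hn,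
    Finset.sum_insert Nat.self_notMem_properDivisors]
  gcongr
  calc ∑ d ∈ n.properDivisors, d * #(monicIrreducibles F d)
      ≤ ∑ d ∈ n.properDivisors, Fintype.card F ^ d :=
        sum_le_sum fun d _ => mul_card_monicIrreducibles_le d
    _ < Fintype.card F ^ (n / 2 + 1) := by
        refine Nat.geomSum_lt hq fun d hd => Nat.lt_succ_of_le ?_
        have hcof := Nat.one_lt_div_of_mem_properDivisors hd
        rw [Nat.le_div_iff_mul_le two_pos]
        calc d * 2 ≤ d * (n / d) := Nat.mul_le_mul_left d hcof
          _ = n := Nat.mul_div_cancel' (Nat.mem_properDivisors.mp hd).1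

theorem abs_card_monicIrreducibles_div_pow_sub_inv_le (n : ℕ) :
    |(#(monicIrreducibles F n) : ℝ) / Fintype.card F ^ n - 1 / n| ≤ 2 / n ^ 2 := by
  rcases eq_or_ne n 0 with rfl | hn
  · simp
  have hq : 2 ≤ Fintype.card F := Fintype.one_lt_card
  have hupper : (n * #(monicIrreducibles F n) : ℝ) ≤ Fintype.card F ^ n := by
    exact_mod_cast mul_card_monicIrreducibles_le n
  have hlower : (Fintype.card F ^ n : ℝ) < n * #(monicIrreducibles F n) +
      Fintype.card F ^ (n / 2 + 1) := by
    exact_mod_cast pow_lt_mul_card_monicIrreducibles_add n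
  have hsmall : (n * Fintype.card F ^ (n / 2 + 1) : ℝ) ≤ 2 * Fintype.card F ^ n := by
    exact_mod_cast Nat.mul_pow_div_two_add_one_le hq n
  have hn0 : (0 : ℝ) < n := by positivity
  have hQ : (0 : ℝ) < Fintype.card F ^ n := by positivity
  rw [abs_sub_comm, abs_of_nonneg, div_sub_div _ _ hn0.ne' hQ.ne',
    div_le_div_iff₀ (by positivity) (by positivity)]
  · nlinarith
  · rw [sub_nonneg, div_le_div_iff₀ hQ hn0]
    linarith

variable (F) in
def irreducibleDensity (n : ℕ) : ℝ := #(monicIrreducibles F n) / Fintype.card F ^ n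

variable (F) in
def irreducibleDensityConstant : ℝ :=
  eulerMascheroniConstant + ∑' n, (irreducibleDensity F n - 1 / n)

theorem abs_sum_range_irreducibleDensity_sub_log_le {N : ℕ} (hN : N ≠ 0) :
    |∑ n ∈ range (N + 1), irreducibleDensity F n - log N - irreducibleDensityConstant F| ≤
      5 / N := by
  have hharmonic : ∑ n ∈ range (N + 1), (1 / n : ℝ) = harmonic N := by
    simp [harmonic, sum_range_succ']
  have htail := abs_tsum_sub_sum_range_le_of_abs_le_div_sq
    (abs_card_monicIrreducibles_div_pow_sub_inv_le (F := F)) N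
  have heq :
      ∑ n ∈ range (N + 1), irreducibleDensity F n - log N - irreducibleDensityConstant F =
      ((harmonic N : ℝ) - log N - eulerMascheroniConstant) -
        (∑' n, (irreducibleDensity F n - 1 / n) -
          ∑ n ∈ range (N + 1), (irreducibleDensity F n - 1 / n)) := by
    rw [sum_sub_distrib, hharmonic, irreducibleDensityConstant]; ring
  have hN0 : (0 : ℝ) < N := by positivity
  have htail' : 2 * 2 / ((N : ℝ) + 1) ≤ 2 * 2 / N :=
    div_le_div_of_nonneg_left (by norm_num) hN0 (by linarith)
  rw [heq]
  calc _ ≤ _ := abs_sub _ _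
    _ ≤ (1 : ℝ) / N + 2 * 2 / N :=
        add_le_add (abs_harmonic_sub_log_sub_eulerMascheroniConstant_le hN) (htail.trans htail')
    _ = 5 / N := by ring

theorem abs_sum_range_floor_irreducibleDensity_sub_log_le {t₀ t : ℝ} (ht₀ : 0 < t₀)
    (ht : t₀ ≤ t) :
    |∑ n ∈ range (⌊t⌋₊ + 1), irreducibleDensity F n - log t - irreducibleDensityConstant F| ≤
      (12 + |log t₀| + |irreducibleDensityConstant F|) / t := by
  set c := irreducibleDensityConstant F
  have htpos : 0 < t := ht₀.trans_le ht
  rcases lt_or_ge t 1 with ht1 | ht1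
  · have hlog : |log t| ≤ |log t₀| := by
      rw [abs_of_neg (log_neg htpos ht1), abs_of_neg (log_neg ht₀ (ht.trans_lt ht1))]
      exact neg_le_neg (log_le_log ht₀ ht)
    rw [Nat.floor_eq_zero.mpr ht1, le_div_iff₀ htpos]
    simp only [zero_add, sum_range_one, irreducibleDensity, monicIrreducibles_zero, card_empty,
      Nat.cast_zero, zero_div, zero_sub]
    have habs : |-log t - c| ≤ |log t₀| + |c| := (abs_sub _ _).trans (by rw [abs_neg]; gcongr)
    nlinarith [abs_nonneg (-log t - c)]
  set N := ⌊t⌋₊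
  have hN : N ≠ 0 := (Nat.floor_pos.mpr ht1).ne'
  have hN0 : (0 : ℝ) < N := by positivity
  have hNt : (N : ℝ) ≤ t := Nat.floor_le htpos.le
  have htN : t < N + 1 := Nat.lt_floor_add_one t
  have hfloor : |log t - log N| ≤ 1 / N := by
    rw [abs_of_nonneg (sub_nonneg.mpr (log_le_log hN0 hNt))]
    linarith [log_le_log htpos htN.le, log_add_one_sub_log_le hN0]
  -- `t < N + 1 ≤ 2 N`
  have hinv : 1 / (N : ℝ) ≤ 2 / t := by
    rw [div_le_div_iff₀ hN0 htpos]
    linarith [show (1 : ℝ) ≤ N by exact_mod_cast Nat.one_le_iff_ne_zero.mpr hN]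
  calc _ = |(∑ n ∈ range (N + 1), irreducibleDensity F n - log N - c) - (log t - log N)| := by
        congr 1; ring
    _ ≤ 5 / N + 1 / N := (abs_sub _ _).trans <|
        add_le_add (abs_sum_range_irreducibleDensity_sub_log_le hN) hfloor
    _ = 6 * (1 / N) := by ring
    _ ≤ 6 * (2 / t) := by gcongr
    _ ≤ (12 + |log t₀| + |c|) / t := by
        rw [mul_div_assoc', div_le_div_iff_of_pos_right htpos]
        linarith [abs_nonneg (log t₀), abs_nonneg c]

theorem finsum_monic_irreducible_fqNorm_le_eq {x : ℝ} (hx : 1 ≤ x) :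
    ∑ᶠ P ∈ {P : F[X] | P.Monic ∧ Irreducible P ∧ fqNorm P ≤ x}, 1 / fqNorm P =
      ∑ n ∈ range (⌊log x / log (Fintype.card F)⌋₊ + 1), irreducibleDensity F n := by
  set N := ⌊log x / log (Fintype.card F)⌋₊
  have hlogq : 0 < log (Fintype.card F) := log_pos (by exact_mod_cast Fintype.one_lt_card)
  have hdeg (d : ℕ) : (Fintype.card F : ℝ) ^ d ≤ x ↔ d ∈ range (N + 1) := by
    rw [pow_le_iff_le_log (by positivity) (by positivity), mem_range, Nat.lt_succ_iff,
      Nat.le_floor_iff (div_nonneg (log_nonneg hx) hlogq.le), le_div_iff₀ hlogq]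
  have hset : {P : F[X] | P.Monic ∧ Irreducible P ∧ fqNorm P ≤ x} =
      ↑((range (N + 1)).biUnion (monicIrreducibles F)) := by
    ext P
    simp only [Set.mem_ofPred_eq, coe_biUnion, Set.mem_iUnion, mem_coe, mem_monicIrreducibles,
      exists_prop]
    constructor
    · rintro ⟨hm, hi, hle⟩
      rw [fqNorm_of_ne_zero_s5 hm.ne_zero, hdeg] at hle
      exact ⟨_, hle, hm, hi, rfl⟩
    · rintro ⟨_, hd, hm, hi, rfl⟩
      rw [fqNorm_of_ne_zero_s5 hm.ne_zero, hdeg]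
      exact ⟨hm, hi, hd⟩
  rw [hset, finsum_mem_coe_finset, sum_biUnion (pairwiseDisjoint_monicIrreducibles _)]
  refine sum_congr rfl fun n _ => ?_
  rw [sum_congr rfl fun P hP => by
      rw [fqNorm_of_ne_zero_s5 (mem_monicIrreducibles.mp hP).1.ne_zero,
        (mem_monicIrreducibles.mp hP).2.2],
    sum_const, nsmul_eq_mul, irreducibleDensity, mul_one_div]

end Polynomial

/-- Mertens-type estimate over `F_q[T]`: there is a constant `b` with
`Σ_{|P| ≤ x} 1/|P| = log log x + b + O(1/log x)`,
the sum running over monic irreducible polynomials. -/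
theorem mertens_second (F : Type) [Field F] [Fintype F] :
    ∃ b C : ℝ, 0 < C ∧
      ∀ x : ℝ, 2 ≤ x →
        |(∑ᶠ P ∈ {P : F[X] | P.Monic ∧ Irreducible P ∧ fqNorm P ≤ x},
            1 / fqNorm P) - Real.log (Real.log x) - b| ≤ C / Real.log x := by
  set L := log (Fintype.card F)
  have hL : 0 < L := log_pos (by exact_mod_cast Fintype.one_lt_card)
  set c := irreducibleDensityConstant F
  set t₀ := log 2 / L
  refine ⟨c - log L, (12 + |log t₀| + |c|) * L, by positivity, fun x hx => ?_⟩
  have hlogx : 0 < log x := log_pos (by linarith)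
  have hbound := abs_sum_range_floor_irreducibleDensity_sub_log_le (F := F)
    (div_pos (log_pos one_lt_two) hL) (div_le_div_of_nonneg_right (log_le_log two_pos hx) hL.le)
  rw [finsum_monic_irreducible_fqNorm_le_eq (by linarith)]
  convert hbound using 1
  · rw [log_div hlogx.ne' hL.ne']; congr 1; ring
  · rw [div_div_eq_mul_div]
end
end
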